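/- Let n be even with a := n/2, and let S₀, T, U₀ ⊆ ℤ_n \ {0} be symmetric sets with 𝟏_{U₀} = 𝟏_{S₀} * 𝟏_T (convolution on ℤ_n), a ∉ S₀, a ∉ T, and (a + T) ∩ U₀ = ∅ with 0 ∉ a + T. Then, setting S = S₀ ∪ {a} and U = U₀ ∪ (a + T), the sets S and U are symmetric, 0 ∉ U, and 𝟏_U = 𝟏_S * 𝟏_T. -/
import Mathlib

open Finset Pointwise

theorem stmt17 (n : ℕ) [NeZero n] (hn : Even n)
    (a : ZMod n) (ha : a = (n / 2 : ℕ))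
    (S₀ T U₀ : Finset (ZMod n))
    (hS₀0 : (0 : ZMod n) ∉ S₀) (hT0 : (0 : ZMod n) ∉ T) (hU₀0 : (0 : ZMod n) ∉ U₀)
    (hS₀sym : -S₀ = S₀) (hTsym : -T = T) (hU₀sym : -U₀ = U₀)
    (hconv : ∀ x : ZMod n,
      (if x ∈ U₀ then (1 : ℤ) else 0)
        = ∑ y : ZMod n, (if y ∈ S₀ then (1 : ℤ) else 0) *
            (if x - y ∈ T then (1 : ℤ) else 0))
    (haS₀ : a ∉ S₀) (haT : a ∉ T)
    (hdisj : Disjoint (T.image (fun t => a + t)) U₀)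
    (h0 : (0 : ZMod n) ∉ T.image (fun t => a + t))
    (S U : Finset (ZMod n))
    (hS : S = S₀ ∪ {a}) (hU : U = U₀ ∪ T.image (fun t => a + t)) :
    -S = S ∧ -U = U ∧ (0 : ZMod n) ∉ U ∧
    (∀ x : ZMod n,
      (if x ∈ U then (1 : ℤ) else 0)
        = ∑ y : ZMod n, (if y ∈ S then (1 : ℤ) else 0) *
            (if x - y ∈ T then (1 : ℤ) else 0)) := by
  obtain ⟨k, hk⟩ := hn
  have haa : a + a = 0 := by
    rw [ha, ← Nat.cast_add]
    have : n / 2 + n / 2 = n := by omega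
    rw [this, ZMod.natCast_self]
  have hnega : -a = a := by
    rw [neg_eq_iff_add_eq_zero, haa]
  have hS₀mem : ∀ x : ZMod n, -x ∈ S₀ ↔ x ∈ S₀ := by
    intro x; conv_rhs => rw [← hS₀sym]
    simp [Finset.mem_neg]
  have hTmem : ∀ x : ZMod n, -x ∈ T ↔ x ∈ T := by
    intro x; conv_rhs => rw [← hTsym]
    simp [Finset.mem_neg]
  have hU₀mem : ∀ x : ZMod n, -x ∈ U₀ ↔ x ∈ U₀ := by
    intro x; conv_rhs => rw [← hU₀sym]
    simp [Finset.mem_neg]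
  refine ⟨?_, ?_, ?_, ?_⟩
  · ext x
    rw [hS]
    simp only [Finset.mem_neg, Finset.mem_union, Finset.mem_singleton]
    constructor
    · rintro ⟨b, hb, rfl⟩
      rcases hb with hb | rfl
      · left; rwa [hS₀mem]
      · right; exact hnega
    · rintro (hx | hxa)
      · exact ⟨-x, Or.inl ((hS₀mem x).mpr hx), neg_neg x⟩
      · exact ⟨-x, Or.inr (by rw [hxa, hnega]), neg_neg x⟩
  · ext x
    rw [hU]
    simp only [Finset.mem_neg, Finset.mem_union, Finset.mem_image]
    constructor
    · rintro ⟨b, hb, rfl⟩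
      rcases hb with hb | ⟨t, ht, rfl⟩
      · left; rwa [hU₀mem]
      · right; exact ⟨-t, (hTmem t).mpr ht, by rw [neg_add, hnega]⟩
    · rintro (hx | ⟨t, ht, rfl⟩)
      · exact ⟨-x, Or.inl ((hU₀mem x).mpr hx), neg_neg x⟩
      · exact ⟨a + -t, Or.inr ⟨-t, (hTmem t).mpr ht, rfl⟩, by rw [neg_add, hnega, neg_neg]⟩
  · rw [hU]
    simp only [Finset.mem_union, not_or]
    exact ⟨hU₀0, h0⟩
  · intro x
    have hsplit : ∀ y : ZMod n, (if y ∈ S then (1 : ℤ) else 0)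
        = (if y ∈ S₀ then (1 : ℤ) else 0) + (if y = a then (1 : ℤ) else 0) := by
      intro y
      rw [hS]
      simp only [Finset.mem_union, Finset.mem_singleton]
      by_cases h1 : y ∈ S₀ <;> by_cases h2 : y = a <;> simp_all
    have hrhs : ∑ y : ZMod n, (if y ∈ S then (1 : ℤ) else 0) *
            (if x - y ∈ T then (1 : ℤ) else 0)
        = (if x ∈ U₀ then (1 : ℤ) else 0) + (if x - a ∈ T then (1 : ℤ) else 0) := by
      simp only [hsplit, add_mul]
      rw [Finset.sum_add_distrib, ← hconv x]
      congr 1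
      rw [Finset.sum_eq_single a]
      · simp
      · intro b _ hb; simp [hb]
      · simp
    rw [hrhs, hU]
    have himg : x ∈ T.image (fun t => a + t) ↔ x - a ∈ T := by
      simp only [Finset.mem_image]
      constructor
      · rintro ⟨t, ht, rfl⟩
        have : a + t - a = t := by ring
        rwa [this]
      · intro h; exact ⟨x - a, h, by ring⟩
    simp only [Finset.mem_union, himg]
    by_cases h1 : x ∈ U₀
    · have h2 : x - a ∉ T := fun h =>
        (Finset.disjoint_right.mp hdisj h1) (himg.mpr h)
      simp [h1, h2]
    · by_cases h2 : x - a ∈ T <;> simp [h1, h2]
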